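/- Let Δ be a finite set with |Δ| = m ≥ 3, let r ≥ 1, and let Γ be a digraph with vertex set Δ^r. Suppose that every coordinatewise permutation u ↦ (k_1(u_1), …, k_r(u_r)) with k_1, …, k_r ∈ Sym(Δ) is an automorphism of Γ, and that conversely every automorphism of Γ is in product-action form (with arbitrary base entries in Sym(Δ) and arbitrary top element in Sym({1,…,r})). Then the minimal degree of Aut(Γ) equals 2·m^{r−1}, and consequently RelFix(Γ) = 1 − 2/m. In particular, every generalised Hamming graph whose full automorphism group is contained in Sym(Δ) ≀ Sym(r) has relative fixity 1 − 2/m. -/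

import Mathlib

/-! By hypothesis every automorphism is a product-action permutation `g = (k₁,…,k_r) h`.
If the top `h` moves a coordinate `i`, then a fixed point `u` satisfies
`u i = k i (u (h⁻¹ i))` with `h⁻¹ i ≠ i`, so it is determined by its other coordinates and `g`
fixes at most `m^(r-1) ≤ (m-2) m^(r-1)` vertices. If `h = 1`, the fixed points of `g` are the
product of the fixed points of the `kᵢ`, and a nontrivial `kᵢ` fixes at most `m - 2` points.
A transposition acting on a single coordinate is an automorphism attaining `(m-2) m^(r-1)`,
so `Fix(Γ) = (m-2) m^(r-1)` and `μ(Aut Γ) = m^r - Fix(Γ) = 2 m^(r-1)`. -/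

/-- The permutation of Δ^r in product-action form with base k = (k_1,…,k_r) ∈ Sym(Δ)^r and
top h ∈ Sym({1,…,r}): it sends u to the tuple whose i-th entry is k_i(u_{h⁻¹(i)}). -/
def paPerm {Δ : Type*} {r : ℕ} (k : Fin r → Equiv.Perm Δ) (h : Equiv.Perm (Fin r)) :
    Equiv.Perm (Fin r → Δ) where
  toFun u i := k i (u (h⁻¹ i))
  invFun u i := (k (h i))⁻¹ (u (h i))
  left_inv u := by funext i; simp
  right_inv u := by funext i; simp

/-- A permutation `g` of the vertex set is an automorphism of the digraph with arc
relation `A` if `(u,v)` is an arc iff `(g u, g v)` is an arc. -/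
def IsDigraphAut {V : Type*} (A : V → V → Prop) (g : Equiv.Perm V) : Prop :=
  ∀ u v : V, A u v ↔ A (g u) (g v)

/-- The fixity of a digraph: the largest number of vertices fixed by a nontrivial
automorphism (0 if there is none). -/
noncomputable def digraphFixity {V : Type*} (A : V → V → Prop) : ℕ :=
  sSup ((fun g : Equiv.Perm V => Nat.card {v : V // g v = v}) ''
    {g : Equiv.Perm V | IsDigraphAut A g ∧ g ≠ 1})

/-- The minimal degree of the automorphism group of a digraph: the least size of the
support of a nontrivial automorphism. -/
noncomputable def digraphMinDegree {V : Type*} (A : V → V → Prop) : ℕ :=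
  sInf ((fun g : Equiv.Perm V => Nat.card {v : V // g v ≠ v}) ''
    {g : Equiv.Perm V | IsDigraphAut A g ∧ g ≠ 1})

open Equiv Finset

lemma card_moved_add_card_fixed {α : Type*} [Finite α] (f : α → α) :
    Nat.card {x // f x ≠ x} + Nat.card {x // f x = x} = Nat.card α := by
  classical
  cases nonempty_fintype α
  simp only [Nat.card_eq_fintype_card, ne_eq, Fintype.card_subtype_compl]
  exact Nat.sub_add_cancel (Fintype.card_subtype_le _)

namespace Equiv.Perm

variable {α : Type*} [Fintype α] [DecidableEq α]

lemma natCard_moved_eq_card_support (σ : Perm α) : Nat.card {x // σ x ≠ x} = #σ.support := by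
  rw [← Nat.card_eq_finsetCard]
  exact Nat.card_congr (subtypeEquivRight fun _ => mem_support.symm)

lemma card_fixed_le_of_ne_one {σ : Perm α} (hσ : σ ≠ 1) :
    Nat.card {x // σ x = x} ≤ Fintype.card α - 2 := by
  have := card_moved_add_card_fixed σ
  rw [natCard_moved_eq_card_support, Nat.card_eq_fintype_card (α := α)] at this
  have := two_le_card_support_of_ne_one hσ
  omega

lemma card_fixed_swap {a b : α} (hab : a ≠ b) :
    Nat.card {x // swap a b x = x} = Fintype.card α - 2 := by
  have := card_moved_add_card_fixed (swap a b)
  rw [natCard_moved_eq_card_support, card_support_swap hab,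
    Nat.card_eq_fintype_card (α := α)] at this
  omega

end Equiv.Perm

section ProductAction

variable {Δ : Type*} {r : ℕ}

lemma paPerm_apply (k : Fin r → Perm Δ) (h : Perm (Fin r)) (u : Fin r → Δ) (i : Fin r) :
    paPerm k h u i = k i (u (h⁻¹ i)) := rfl

lemma paPerm_one_one : paPerm (1 : Fin r → Perm Δ) 1 = 1 := rfl

def fixedPaPermOneEquivPi (k : Fin r → Perm Δ) :
    {u // paPerm k 1 u = u} ≃ ∀ i, {x // k i x = x} :=
  (subtypeEquivRight fun u => by simp [funext_iff, paPerm_apply]).trans subtypePiEquivPi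

lemma card_fixed_paPerm_one (k : Fin r → Perm Δ) :
    Nat.card {u // paPerm k 1 u = u} = ∏ i, Nat.card {x // k i x = x} := by
  rw [Nat.card_congr (fixedPaPermOneEquivPi k), Nat.card_pi]

variable [Fintype Δ]

lemma card_fixed_paPerm_one_le {k : Fin r → Perm Δ} (hk : k ≠ 1) :
    Nat.card {u // paPerm k 1 u = u} ≤ (Fintype.card Δ - 2) * Fintype.card Δ ^ (r - 1) := by
  classical
  obtain ⟨i, hi⟩ : ∃ i, k i ≠ 1 := Function.ne_iff.mp hk
  rw [card_fixed_paPerm_one, ← mul_prod_erase univ _ (mem_univ i)]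
  gcongr
  · exact Perm.card_fixed_le_of_ne_one hi
  · calc ∏ j ∈ univ.erase i, Nat.card {x // k j x = x}
        ≤ Fintype.card Δ ^ #(univ.erase i) :=
          prod_le_pow_card _ _ _ fun _ _ =>
            (Finite.card_subtype_le _).trans_eq Nat.card_eq_fintype_card
      _ = Fintype.card Δ ^ (r - 1) := by simp [card_erase_of_mem]

lemma card_fixed_paPerm_le_of_ne_one (k : Fin r → Perm Δ) {h : Perm (Fin r)} (hh : h ≠ 1) :
    Nat.card {u // paPerm k h u = u} ≤ Fintype.card Δ ^ (r - 1) := by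
  obtain ⟨i, hi⟩ : ∃ i, h⁻¹ i ≠ i := by
    by_contra! hc
    exact hh (inv_eq_one.mp (Perm.ext hc))
  have hinj :
      Function.Injective fun (u : {u // paPerm k h u = u}) (j : {j // j ≠ i}) => u.1 j := by
    intro u v huv
    ext j
    by_cases hj : j = i
    · subst hj
      rw [← u.2, ← v.2, paPerm_apply, paPerm_apply]
      exact congrArg (k j) (congrFun huv ⟨h⁻¹ j, hi⟩)
    · exact congrFun huv ⟨j, hj⟩
  calc Nat.card {u // paPerm k h u = u} ≤ Nat.card ({j // j ≠ i} → Δ) :=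
        Nat.card_le_card_of_injective _ hinj
    _ = Fintype.card Δ ^ (r - 1) := by simp [Fintype.card_subtype_compl]

lemma card_fixed_paPerm_le (hm : 3 ≤ Fintype.card Δ) {k : Fin r → Perm Δ} {h : Perm (Fin r)}
    (hg : paPerm k h ≠ 1) :
    Nat.card {u // paPerm k h u = u} ≤ (Fintype.card Δ - 2) * Fintype.card Δ ^ (r - 1) := by
  rcases eq_or_ne h 1 with rfl | hh
  · exact card_fixed_paPerm_one_le fun hk => hg (hk ▸ paPerm_one_one)
  · exact (card_fixed_paPerm_le_of_ne_one k hh).trans (Nat.le_mul_of_pos_left _ (by omega))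

lemma card_fixed_paPerm_mulSingle_swap [DecidableEq Δ] (i : Fin r) {a b : Δ} (hab : a ≠ b) :
    Nat.card {u // paPerm (Pi.mulSingle i (swap a b)) 1 u = u} =
      (Fintype.card Δ - 2) * Fintype.card Δ ^ (r - 1) := by
  rw [card_fixed_paPerm_one, ← mul_prod_erase univ _ (mem_univ i), Pi.mulSingle_eq_same,
    Perm.card_fixed_swap hab]
  congr 1
  rw [prod_congr rfl fun j hj => by rw [Pi.mulSingle_eq_of_ne (ne_of_mem_erase hj)]]
  simp [card_erase_of_mem]

end ProductAction

lemma digraphFixity_eq_and_digraphMinDegree_eq {V : Type*} [Finite V] {A : V → V → Prop}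
    {F : ℕ} (hF : F < Nat.card V)
    (hle : ∀ g, IsDigraphAut A g → g ≠ 1 → Nat.card {v // g v = v} ≤ F)
    {g₀ : Perm V} (hg₀ : IsDigraphAut A g₀) (hfix₀ : Nat.card {v // g₀ v = v} = F) :
    digraphFixity A = F ∧ digraphMinDegree A = Nat.card V - F := by
  have hne : g₀ ≠ 1 := by
    rintro rfl
    simp only [Perm.one_apply, Nat.card_subtype_true] at hfix₀
    omega
  refine ⟨IsGreatest.csSup_eq ⟨⟨g₀, ⟨hg₀, hne⟩, hfix₀⟩, ?_⟩,
    IsLeast.csInf_eq ⟨⟨g₀, ⟨hg₀, hne⟩, ?_⟩, ?_⟩⟩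
  · rintro _ ⟨g, ⟨hg, hg1⟩, rfl⟩
    exact hle g hg hg1
  · have := card_moved_add_card_fixed g₀
    dsimp only
    omega
  · rintro _ ⟨g, ⟨hg, hg1⟩, rfl⟩
    have := card_moved_add_card_fixed g
    have := hle g hg hg1
    dsimp only
    omega

/-- Let Δ be a finite set with |Δ| = m ≥ 3, let r ≥ 1, and let Γ be a digraph
with vertex set Δ^r. Suppose that every coordinatewise permutation
u ↦ (k_1(u_1), …, k_r(u_r)) with k_i ∈ Sym(Δ) is an automorphism of Γ, and that conversely
every automorphism of Γ is in product-action form. Then the minimal degree of Aut(Γ) equals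
2·m^{r−1}, and consequently RelFix(Γ) = 1 − 2/m. In particular, every generalised Hamming
graph whose full automorphism group is contained in Sym(Δ) ≀ Sym(r) has relative fixity
1 − 2/m. -/
theorem stmt_13 {Δ : Type*} [Fintype Δ] (hm : 3 ≤ Fintype.card Δ) (r : ℕ) (hr : 1 ≤ r)
    (A : (Fin r → Δ) → (Fin r → Δ) → Prop)
    (hbase : ∀ k : Fin r → Equiv.Perm Δ, IsDigraphAut A (paPerm k 1))
    (hform : ∀ g : Equiv.Perm (Fin r → Δ), IsDigraphAut A g →
        ∃ (k : Fin r → Equiv.Perm Δ) (h : Equiv.Perm (Fin r)), g = paPerm k h) :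
    digraphMinDegree A = 2 * Fintype.card Δ ^ (r - 1) ∧
    (digraphFixity A : ℝ) / Nat.card (Fin r → Δ) = 1 - 2 / Fintype.card Δ := by
  classical
  set m := Fintype.card Δ
  set X := m ^ (r - 1)
  have hX : 0 < X := by positivity
  have hcard : Nat.card (Fin r → Δ) = m * X := by
    rw [Nat.card_fun, Nat.card_fin, Nat.card_eq_fintype_card, ← pow_succ', Nat.sub_add_cancel hr]
  have hsplit : (m - 2) * X + 2 * X = m * X := by rw [← add_mul, Nat.sub_add_cancel (by omega)]
  obtain ⟨a, b, hab⟩ := Fintype.exists_pair_of_one_lt_card (by omega : 1 < m)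
  obtain ⟨hfixity, hmin⟩ :=
    digraphFixity_eq_and_digraphMinDegree_eq (F := (m - 2) * X) (by omega)
    (fun g hg hg1 => by
      obtain ⟨k, h, rfl⟩ := hform g hg
      exact card_fixed_paPerm_le hm hg1)
    (hbase _) (card_fixed_paPerm_mulSingle_swap ⟨0, hr⟩ hab)
  refine ⟨by omega, ?_⟩
  rw [hfixity, hcard]
  have hm0 : (m : ℝ) ≠ 0 := by positivity
  push_cast [Nat.cast_sub (by omega : 2 ≤ m)]
  field_simp
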